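/- arXiv:1302.1630 — 6 statements merged into one kernel-verified Lean document; each statement's English description precedes it below -/
import Mathlib

section
/- Pasch's theorem: let A, B, C be non-collinear points of the Euclidean plane and let ℓ be an affine line (a one-dimensional affine subspace) that contains none of A, B, C. If ℓ meets the segment [A B], then ℓ meets exactly one of the segments [B C] and [C A]; consequently ℓ intersects either two or zero of the three sides [A B], [B C], [C A] of the triangle. -/
open scoped RealInnerProductSpace

lemma real_cross (u v : ℝ) (hu : u ≠ 0) (hv : v ≠ 0) :
    (∃ a b : ℝ, 0 ≤ a ∧ 0 ≤ b ∧ a + b = 1 ∧ a * u + b * v = 0) ↔ u * v < 0 := by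
  constructor
  · rintro ⟨a, b, ha, hb, hab, h0⟩
    rcases hu.lt_or_gt with h | h <;> rcases hv.lt_or_gt with h' | h'
    · exfalso
      have h1 : a * u ≤ 0 := by nlinarith
      have h2 : b * v ≤ 0 := by nlinarith
      have ha0 : a * u = 0 := by linarith
      have hb0 : b * v = 0 := by linarith
      have haz : a = 0 := (mul_eq_zero.mp ha0).resolve_right hu
      have hbz : b = 0 := (mul_eq_zero.mp hb0).resolve_right hv
      linarith
    · exact mul_neg_of_neg_of_pos h h'
    · exact mul_neg_of_pos_of_neg h h'
    · exfalso
      have h1 : 0 ≤ a * u := by nlinarith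
      have h2 : 0 ≤ b * v := by nlinarith
      have ha0 : a * u = 0 := by linarith
      have hb0 : b * v = 0 := by linarith
      have haz : a = 0 := (mul_eq_zero.mp ha0).resolve_right hu
      have hbz : b = 0 := (mul_eq_zero.mp hb0).resolve_right hv
      linarith
  · intro huv
    have hd : u - v ≠ 0 := by
      intro hEq
      have hveq : u = v := by linarith
      rw [hveq] at huv
      nlinarith [mul_self_nonneg v]
    refine ⟨-v / (u - v), u / (u - v), ?_, ?_, ?_, ?_⟩
    · rcases hu.lt_or_gt with h | h
      · have hv' : 0 < v := by nlinarith
        rw [div_nonneg_iff]; right; constructor <;> linarith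
      · have hv' : v < 0 := by nlinarith
        rw [div_nonneg_iff]; left; constructor <;> linarith
    · rcases hu.lt_or_gt with h | h
      · have hv' : 0 < v := by nlinarith
        rw [div_nonneg_iff]; right; constructor <;> linarith
      · have hv' : v < 0 := by nlinarith
        rw [div_nonneg_iff]; left; constructor <;> linarith
    · field_simp
      ring
    · field_simp
      ring

theorem pasch (A B C : EuclideanSpace ℝ (Fin 2))
    (h : ¬ Collinear ℝ ({A, B, C} : Set (EuclideanSpace ℝ (Fin 2))))
    (ℓ : AffineSubspace ℝ (EuclideanSpace ℝ (Fin 2)))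
    (hdim : Module.finrank ℝ ℓ.direction = 1)
    (hA : A ∉ ℓ) (hB : B ∉ ℓ) (hC : C ∉ ℓ)
    (hAB : ∃ P ∈ segment ℝ A B, P ∈ ℓ) :
    Xor' (∃ P ∈ segment ℝ B C, P ∈ ℓ) (∃ P ∈ segment ℝ C A, P ∈ ℓ) := by
  have h2 : Module.finrank ℝ (EuclideanSpace ℝ (Fin 2)) = 2 := by simp
  -- ℓ is nonempty
  obtain ⟨p, hp⟩ : ((ℓ : Set (EuclideanSpace ℝ (Fin 2)))).Nonempty := by
    rw [AffineSubspace.nonempty_iff_ne_bot]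
    intro hbot
    rw [hbot, AffineSubspace.direction_bot] at hdim
    simp at hdim
  -- get a normal vector
  set D := ℓ.direction with hD
  have hDorth : Module.finrank ℝ Dᗮ = 1 := by
    have := Submodule.finrank_add_finrank_orthogonal (K := D)
    omega
  obtain ⟨n, hnD, hn0⟩ : ∃ n ∈ Dᗮ, n ≠ 0 := by
    rw [← Submodule.ne_bot_iff]
    intro hb
    rw [hb] at hDorth
    simp at hDorth
  -- D equals the orthogonal complement of span n
  set K := (ℝ ∙ n)ᗮ with hK
  have hmemK : ∀ v, v ∈ K ↔ ⟪n, v⟫ = 0 := fun v =>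
    Submodule.mem_orthogonal_singleton_iff_inner_right
  have hDK : D ≤ K := by
    intro v hv
    rw [hmemK, real_inner_comm]
    exact (Submodule.mem_orthogonal D n).mp hnD v hv
  have hKrank : Module.finrank ℝ K = 1 := by
    have h1 := Submodule.finrank_add_finrank_orthogonal (K := (ℝ ∙ n))
    have h3 : Module.finrank ℝ (ℝ ∙ n) = 1 := finrank_span_singleton hn0
    rw [← hK] at h1
    omega
  have hDeq : D = K := Submodule.eq_of_le_of_finrank_eq hDK (by rw [hdim, hKrank])
  -- membership criterion
  set g : EuclideanSpace ℝ (Fin 2) → ℝ := fun x => ⟪n, x - p⟫ with hg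
  have hmem : ∀ x, x ∈ ℓ ↔ g x = 0 := by
    intro x
    constructor
    · intro hx
      have hv : x -ᵥ p ∈ D := AffineSubspace.vsub_mem_direction hx hp
      rw [hDeq, hmemK] at hv
      exact hv
    · intro hx
      have hv : x - p ∈ K := (hmemK _).mpr hx
      rw [← hDeq] at hv
      have := AffineSubspace.vadd_mem_of_mem_direction hv hp
      simpa [vsub_vadd] using this
  -- g respects affine combinations
  have haff : ∀ (a b : ℝ) (X Y : EuclideanSpace ℝ (Fin 2)), a + b = 1 →
      g (a • X + b • Y) = a * g X + b * g Y := by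
    intro a b X Y hab
    have hb' : b = 1 - a := by linarith
    subst hb'
    have hvec : a • X + (1 - a) • Y - p = a • (X - p) + (1 - a) • (Y - p) := by
      module
    rw [hg]
    simp only [hvec, inner_add_right, real_inner_smul_right]
  -- key equivalence for each side
  have key : ∀ X Y : EuclideanSpace ℝ (Fin 2), g X ≠ 0 → g Y ≠ 0 →
      ((∃ P ∈ segment ℝ X Y, P ∈ ℓ) ↔ g X * g Y < 0) := by
    intro X Y hX hY
    rw [← real_cross _ _ hX hY]
    constructor
    · rintro ⟨P, ⟨a, b, ha, hb, hab, hP⟩, hPl⟩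
      refine ⟨a, b, ha, hb, hab, ?_⟩
      rw [← haff a b X Y hab, hP]
      exact (hmem P).mp hPl
    · rintro ⟨a, b, ha, hb, hab, h0⟩
      refine ⟨a • X + b • Y, ⟨a, b, ha, hb, hab, rfl⟩, ?_⟩
      rw [hmem, haff a b X Y hab]
      exact h0
  have hgA : g A ≠ 0 := fun h0 => hA ((hmem A).mpr h0)
  have hgB : g B ≠ 0 := fun h0 => hB ((hmem B).mpr h0)
  have hgC : g C ≠ 0 := fun h0 => hC ((hmem C).mpr h0)
  have hab : g A * g B < 0 := (key A B hgA hgB).mp hAB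
  simp only [Xor']
  rw [key B C hgB hgC, key C A hgC hgA]
  rcases hgC.lt_or_gt with hc | hc <;> rcases hgA.lt_or_gt with ha | ha
  · -- gC < 0, gA < 0, hence gB > 0 : BC crosses, CA doesn't
    have hb' : 0 < g B := by nlinarith
    exact Or.inl ⟨by nlinarith, by intro hx; nlinarith⟩
  · -- gC < 0, gA > 0, hence gB < 0 : CA crosses, BC doesn't
    have hb' : g B < 0 := by nlinarith
    exact Or.inr ⟨by nlinarith, by intro hx; nlinarith⟩
  · -- gC > 0, gA < 0 : CA crosses, BC doesn't
    have hb' : 0 < g B := by nlinarith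
    exact Or.inr ⟨by nlinarith, by intro hx; nlinarith⟩
  · -- gC > 0, gA > 0 : BC crosses, CA doesn't
    have hb' : g B < 0 := by nlinarith
    exact Or.inl ⟨by nlinarith, by intro hx; nlinarith⟩
end

section
/- Ptolemy's identity: let A, B, C, D be pairwise distinct points of the Euclidean plane lying on a common circle (there exist a point O and a radius r > 0 with dist O A = dist O B = dist O C = dist O D = r), appearing on the circle in this cyclic order in the sense that the segments [A C] and [B D] have a common point. Then dist A B * dist C D + dist B C * dist D A = dist A C * dist B D. -/
open EuclideanGeometry Real

theorem ptolemy (A B C D O : EuclideanSpace ℝ (Fin 2)) (r : ℝ) (hr : 0 < r)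
    (hA : dist O A = r) (hB : dist O B = r) (hC : dist O C = r) (hD : dist O D = r)
    (hAB : A ≠ B) (hAC : A ≠ C) (hAD : A ≠ D)
    (hBC : B ≠ C) (hBD : B ≠ D) (hCD : C ≠ D)
    (horder : (segment ℝ A C ∩ segment ℝ B D).Nonempty) :
    dist A B * dist C D + dist B C * dist D A = dist A C * dist B D := by
  have hsph : Cospherical ({A, B, C, D} : Set (EuclideanSpace ℝ (Fin 2))) := by
    refine ⟨O, r, ?_⟩
    intro p hp
    simp only [Set.mem_insert_iff, Set.mem_singleton_iff] at hp
    rcases hp with rfl | rfl | rfl | rfl <;> rw [dist_comm] <;> assumption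
  obtain ⟨P, hPAC, hPBD⟩ := horder
  rw [mem_segment_iff_wbtw] at hPAC hPBD
  have hnc : ∀ X Y Z : EuclideanSpace ℝ (Fin 2),
      X ∈ ({A, B, C, D} : Set (EuclideanSpace ℝ (Fin 2))) →
      Y ∈ ({A, B, C, D} : Set (EuclideanSpace ℝ (Fin 2))) →
      Z ∈ ({A, B, C, D} : Set (EuclideanSpace ℝ (Fin 2))) →
      X ≠ Y → X ≠ Z → Y ≠ Z → ¬ Collinear ℝ ({X, Y, Z} : Set (EuclideanSpace ℝ (Fin 2))) := by
    intro X Y Z hX hY hZ hXY hXZ hYZ hcol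
    have := hsph.affineIndependent_of_mem_of_ne hX hY hZ hXY hXZ hYZ
    rw [affineIndependent_iff_not_collinear_set] at this
    exact this hcol
  have memA : A ∈ ({A, B, C, D} : Set (EuclideanSpace ℝ (Fin 2))) := by simp
  have memB : B ∈ ({A, B, C, D} : Set (EuclideanSpace ℝ (Fin 2))) := by simp
  have memC : C ∈ ({A, B, C, D} : Set (EuclideanSpace ℝ (Fin 2))) := by simp
  have memD : D ∈ ({A, B, C, D} : Set (EuclideanSpace ℝ (Fin 2))) := by simp
  have hPA : P ≠ A := by
    rintro rfl
    exact hnc B P D memB memA memD hAB.symm hBD hAD hPBD.collinear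
  have hPC : P ≠ C := by
    rintro rfl
    exact hnc B P D memB memC memD hBC hBD hCD hPBD.collinear
  have hPB : P ≠ B := by
    rintro rfl
    exact hnc A P C memA memB memC hAB hAC hBC hPAC.collinear
  have hPD : P ≠ D := by
    rintro rfl
    exact hnc A P C memA memD memC hAD hAC hCD.symm hPAC.collinear
  have h1 : ∠ A P C = π := angle_eq_pi_iff_sbtw.2 ⟨hPAC, hPA, hPC⟩
  have h2 : ∠ B P D = π := angle_eq_pi_iff_sbtw.2 ⟨hPBD, hPB, hPD⟩
  exact mul_dist_add_mul_dist_eq_mul_dist_of_cospherical hsph h1 h2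
end

section
/- Angle between a tangent line and a chord: let O be a point of the oriented Euclidean plane, r > 0, and let X, Y be distinct points with dist O X = dist O Y = r. Let Q be a point with Q ≠ X and ⟪Q - X, O - X⟫ = 0 (so the line (X Q) is tangent at X to the circle with center O through X and Y). Then (2 : ℤ) • ∡ Q X Y = ∡ X O Y as oriented angles. -/
/-!
Split `∡ Q X Y = ∡ Q X O + ∡ O X Y`. The tangent is perpendicular to the radius, so
`2 • ∡ Q X O = π`; the triangle `X O Y` is isosceles, so `∡ X O Y = π - 2 • ∡ Y X O`.
Adding the two gives the claim.
-/

open EuclideanGeometry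
open scoped RealInnerProductSpace

noncomputable instance : Fact (Module.finrank ℝ (EuclideanSpace ℝ (Fin 2)) = 2) :=
  ⟨finrank_euclideanSpace_fin⟩

noncomputable instance : Module.Oriented ℝ (EuclideanSpace ℝ (Fin 2)) (Fin 2) :=
  ⟨Module.Basis.orientation (EuclideanSpace.basisFun (Fin 2) ℝ).toBasis⟩

open Real

namespace EuclideanGeometry

variable {V P : Type*} [NormedAddCommGroup V] [InnerProductSpace ℝ V] [MetricSpace P]
  [NormedAddTorsor V P] [Fact (Module.finrank ℝ V = 2)] [Module.Oriented ℝ V (Fin 2)]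

theorem two_zsmul_oangle_eq_pi_of_inner_eq_zero {p₁ p₂ p₃ : P} (h₁ : p₁ ≠ p₂) (h₃ : p₃ ≠ p₂)
    (h : ⟪p₁ -ᵥ p₂, p₃ -ᵥ p₂⟫ = 0) : (2 : ℤ) • ∡ p₁ p₂ p₃ = π := by
  rw [Real.Angle.two_zsmul_eq_pi_iff]
  have hperp := positiveOrientation.eq_zero_or_oangle_eq_iff_inner_eq_zero.2 h
  rwa [or_iff_right (vsub_ne_zero.2 h₁), or_iff_right (vsub_ne_zero.2 h₃)] at hperp

theorem Sphere.two_zsmul_oangle_of_inner_center_eq_zero {s : Sphere P} {p₁ p₂ q : P}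
    (hp₁ : p₁ ∈ s) (hp₂ : p₂ ∈ s) (h : p₁ ≠ p₂) (hq : q ≠ p₁)
    (htan : ⟪q -ᵥ p₁, s.center -ᵥ p₁⟫ = 0) :
    (2 : ℤ) • ∡ q p₁ p₂ = ∡ p₁ s.center p₂ := by
  have hc : s.center ≠ p₁ := (Sphere.ne_center_of_mem_of_mem_of_ne hp₁ hp₂ h).symm
  rw [← oangle_add hq hc h.symm, smul_add, two_zsmul_oangle_eq_pi_of_inner_eq_zero hq hc htan,
    Sphere.oangle_eq_pi_sub_two_zsmul_oangle_center_right hp₁ hp₂ h, oangle_rev p₂, smul_neg,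
    ← sub_eq_add_neg]

end EuclideanGeometry

theorem tangent_chord_angle_general (O X Y Q : EuclideanSpace ℝ (Fin 2)) (r : ℝ)
    (hXY : X ≠ Y) (hX : dist O X = r) (hY : dist O Y = r)
    (hQX : Q ≠ X) (htan : ⟪Q - X, O - X⟫ = 0) :
    (2 : ℤ) • ∡ Q X Y = ∡ X O Y :=
  Sphere.two_zsmul_oangle_of_inner_center_eq_zero (s := ⟨O, r⟩)
    (mem_sphere'.2 hX) (mem_sphere'.2 hY) hXY hQX htan

theorem tangent_chord_angle (O X Y Q : EuclideanSpace ℝ (Fin 2)) (r : ℝ) (hr : 0 < r)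
    (hXY : X ≠ Y) (hX : dist O X = r) (hY : dist O Y = r)
    (hQX : Q ≠ X) (htan : ⟪Q - X, O - X⟫ = 0) :
    (2 : ℤ) • ∡ Q X Y = ∡ X O Y :=
  tangent_chord_angle_general O X Y Q r hXY hX hY hQX htan
end

section
/- A circle not passing through the center of inversion is inverted into a circle not passing through the center: let O be a point of the Euclidean plane, r > 0, and let Γ be the circle with center Q and radius s > 0, with O ∉ Γ. Then there exist a point Q' and s' > 0 with O not on the circle of center Q' and radius s', such that the image of Γ under the inversion with center O and radius r is exactly the circle with center Q' and radius s'. -/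
/-!
Inversion at `c` with radius `R` maps a sphere `Γ` with `c ∉ Γ` onto the image of `Γ` under the
homothety at `c` with ratio `R² / p`, where `p` is the power of `c` with respect to `Γ`. That each
point of `Γ` lands on this sphere is a direct computation, with `u` and `v` the vectors from `c` to
the center and to the point, using `2⟪u, v⟫ = ‖u‖² + ‖v‖² - ρ²`. Equality of the two sets then
follows because the construction is an involution: the power of `c` with respect to the new sphere
is `R⁴ / p`.
-/

open EuclideanGeometry

namespace EuclideanGeometry

variable {V P : Type*} [NormedAddCommGroup V] [InnerProductSpace ℝ V] [MetricSpace P]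
  [NormedAddTorsor V P]

noncomputable def Sphere.inversion (s : Sphere P) (c : P) (R : ℝ) : Sphere P where
  center := AffineMap.homothety c (R ^ 2 / s.power c) s.center
  radius := |R ^ 2 / s.power c| * s.radius

@[simp]
theorem Sphere.inversion_center (s : Sphere P) (c : P) (R : ℝ) :
    (s.inversion c R).center = AffineMap.homothety c (R ^ 2 / s.power c) s.center :=
  rfl

@[simp]
theorem Sphere.inversion_radius (s : Sphere P) (c : P) (R : ℝ) :
    (s.inversion c R).radius = |R ^ 2 / s.power c| * s.radius :=
  rfl

theorem Sphere.power_inversion (s : Sphere P) (c : P) (R : ℝ) :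
    (s.inversion c R).power c = R ^ 4 / s.power c := by
  have hk : (s.inversion c R).power c = (R ^ 2 / s.power c) ^ 2 * s.power c := by
    simp only [Sphere.power, Sphere.inversion, dist_homothety_center, Real.norm_eq_abs, mul_pow,
      sq_abs, dist_comm c]
    ring
  rw [hk]
  rcases eq_or_ne (s.power c) 0 with h | h
  · simp [h]
  · field_simp

theorem Sphere.power_inversion_ne_zero (s : Sphere P) (c : P) {R : ℝ} (hR : R ≠ 0)
    (hs : s.power c ≠ 0) : (s.inversion c R).power c ≠ 0 := by
  rw [Sphere.power_inversion]
  exact div_ne_zero (pow_ne_zero 4 hR) hs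

theorem Sphere.inversion_inversion (s : Sphere P) (c : P) {R : ℝ} (hR : R ≠ 0)
    (hs : s.power c ≠ 0) : (s.inversion c R).inversion c R = s := by
  have hk : R ^ 2 / (s.inversion c R).power c * (R ^ 2 / s.power c) = 1 := by
    rw [Sphere.power_inversion]
    field_simp
  ext
  · rw [Sphere.inversion_center, Sphere.inversion_center, ← AffineMap.homothety_mul_apply, hk,
      AffineMap.homothety_one, AffineMap.id_apply]
  · rw [Sphere.inversion_radius, Sphere.inversion_radius, ← mul_assoc, ← abs_mul, hk, abs_one,
      one_mul]

theorem inversion_mem_sphere_inversion {s : Sphere P} {c x : P} (R : ℝ) (hs : s.power c ≠ 0)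
    (hx : x ∈ s) : inversion c R x ∈ s.inversion c R := by
  have hxc : x ≠ c := by
    rintro rfl
    exact hs (by rw [Sphere.power, mem_sphere.1 hx, sub_self])
  rw [mem_sphere, inversion, Sphere.inversion_center, Sphere.inversion_radius,
    AffineMap.homothety_apply, dist_vadd_cancel_right, dist_eq_norm_vsub V x c, dist_eq_norm]
  set u := s.center -ᵥ c
  set v := x -ᵥ c
  set k := R ^ 2 / s.power c
  have hpower : s.power c = ‖u‖ ^ 2 - s.radius ^ 2 := by
    rw [Sphere.power, dist_comm, dist_eq_norm_vsub V]
  have hv : ‖v‖ ≠ 0 := by simpa [v] using hxc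
  have hinner : 2 * inner ℝ u v = ‖u‖ ^ 2 + ‖v‖ ^ 2 - s.radius ^ 2 := by
    have huv : ‖u - v‖ = s.radius := by
      rw [vsub_sub_vsub_cancel_right, ← dist_eq_norm_vsub V, dist_comm, mem_sphere.1 hx]
    rw [← huv, norm_sub_sq_real]
    ring
  have hρ : 0 ≤ s.radius := mem_sphere.1 hx ▸ dist_nonneg
  rw [← pow_left_inj₀ (norm_nonneg _) (by positivity) two_ne_zero, norm_sub_sq_real, norm_smul,
    norm_smul, real_inner_smul_left, real_inner_smul_right, real_inner_comm]
  simp only [k, hpower, Real.norm_eq_abs, mul_pow, sq_abs]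
  rw [hpower] at hs
  field_simp
  linear_combination (-R ^ 4 * (‖u‖ ^ 2 - s.radius ^ 2)) * hinner

theorem image_inversion_sphere {s : Sphere P} {c : P} {R : ℝ} (hR : R ≠ 0) (hs : s.power c ≠ 0) :
    inversion c R '' s = s.inversion c R := by
  refine subset_antisymm (Set.image_subset_iff.2 fun x hx ↦ inversion_mem_sphere_inversion R hs hx)
    fun y hy ↦ ⟨inversion c R y, ?_, inversion_inversion c hR y⟩
  rw [← Sphere.inversion_inversion s c hR hs]
  exact inversion_mem_sphere_inversion R (s.power_inversion_ne_zero c hR hs) hy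

end EuclideanGeometry

theorem inversion_circle_to_circle (O Q : EuclideanSpace ℝ (Fin 2)) (r s : ℝ)
    (hr : 0 < r) (hs : 0 < s) (hO : dist Q O ≠ s) :
    ∃ (Q' : EuclideanSpace ℝ (Fin 2)) (s' : ℝ), 0 < s' ∧ dist Q' O ≠ s' ∧
      inversion O r '' {P | dist Q P = s} = {P | dist Q' P = s'} := by
  set Γ : Sphere (EuclideanSpace ℝ (Fin 2)) := ⟨Q, s⟩
  have hΓ : Γ.power O ≠ 0 := by
    rwa [Ne, Sphere.power_eq_zero_iff_mem_sphere hs.le, mem_sphere']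
  set Γ' := Γ.inversion O r
  have hΓ'_radius : 0 < Γ'.radius := mul_pos (abs_pos.2 (div_ne_zero (pow_ne_zero 2 hr.ne') hΓ)) hs
  have hΓ' : Γ'.power O ≠ 0 := Γ.power_inversion_ne_zero O hr.ne' hΓ
  refine ⟨Γ'.center, Γ'.radius, hΓ'_radius, ?_, ?_⟩
  · rwa [Ne, Sphere.power_eq_zero_iff_mem_sphere hΓ'_radius.le, mem_sphere'] at hΓ'
  · rw [show {P | dist Q P = s} = (Γ : Set _) from Set.ext fun _ ↦ Metric.mem_sphere'.symm,
      image_inversion_sphere hr.ne' hΓ]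
    exact Set.ext fun _ ↦ Metric.mem_sphere'
end

section
/- A line not passing through the center of inversion is inverted into a circle through the center (with the center itself removed): let O be a point of the Euclidean plane, r > 0, and let ℓ be an affine line (one-dimensional affine subspace) with O ∉ ℓ. Then there exist a point Q' and s' > 0 such that O lies on the circle with center Q' and radius s' and the image of ℓ under the inversion with center O and radius r equals that circle with the point O removed. -/
/-!
A hyperplane not through `O` is the perpendicular bisector of `O` and its mirror image `y`
in the hyperplane, and inversion in `O` maps the perpendicular bisector of `O` and `y` onto the
sphere through `O` centred at the inverse of `y`, punctured at `O`.
-/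

open EuclideanGeometry

theorem AffineSubspace.eq_perpBisector_reflection {V P : Type*} [NormedAddCommGroup V]
    [InnerProductSpace ℝ V] [FiniteDimensional ℝ V] [MetricSpace P] [NormedAddTorsor V P]
    (s : AffineSubspace ℝ P) [Nonempty s]
    (hdim : Module.finrank ℝ V = Module.finrank ℝ s.direction + 1) {O : P} (hO : O ∉ s) :
    s = AffineSubspace.perpBisector O (reflection s O) := by
  have hle : s ≤ AffineSubspace.perpBisector O (reflection s O) := fun p hp => by
    rw [AffineSubspace.mem_perpBisector_iff_dist_eq, dist_reflection_eq_of_mem s hp]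
  have hne : reflection s O -ᵥ O ≠ 0 :=
    vsub_ne_zero.2 fun h => hO ((reflection_eq_self_iff O).1 h)
  have : Fact (Module.finrank ℝ V = Module.finrank ℝ s.direction + 1) := ⟨hdim⟩
  refine AffineSubspace.eq_of_direction_eq_of_nonempty_of_le ?_
    (Set.nonempty_coe_sort.1 ‹_›) hle
  refine Submodule.eq_of_le_of_finrank_eq (AffineSubspace.direction_le hle) ?_
  rw [AffineSubspace.direction_perpBisector]
  exact (Submodule.finrank_orthogonal_span_singleton hne).symm

theorem inversion_line_to_circle (O : EuclideanSpace ℝ (Fin 2)) (r : ℝ) (hr : 0 < r)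
    (ℓ : AffineSubspace ℝ (EuclideanSpace ℝ (Fin 2)))
    (hdim : Module.finrank ℝ ℓ.direction = 1) (hO : O ∉ ℓ) :
    ∃ (Q' : EuclideanSpace ℝ (Fin 2)) (s' : ℝ), 0 < s' ∧ dist Q' O = s' ∧
      inversion O r '' (ℓ : Set (EuclideanSpace ℝ (Fin 2))) =
        {P | dist Q' P = s'} \ {O} := by
  have : Nonempty ℓ := (ℓ.nonempty_iff_ne_bot.2 fun h => by
    rw [h, AffineSubspace.direction_bot, finrank_bot] at hdim
    exact zero_ne_one hdim).to_subtype
  have hy : reflection ℓ O ≠ O := fun h => hO ((reflection_eq_self_iff O).1 h)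
  have hℓ : (ℓ : Set (EuclideanSpace ℝ (Fin 2))) = AffineSubspace.perpBisector O (reflection ℓ O) :=
    congrArg _ (ℓ.eq_perpBisector_reflection (by rw [hdim, finrank_euclideanSpace_fin]) hO)
  refine ⟨inversion O r (reflection ℓ O), r ^ 2 / dist (reflection ℓ O) O,
    div_pos (pow_pos hr 2) (dist_pos.2 hy), dist_inversion_center .., ?_⟩
  rw [hℓ, image_inversion_perpBisector hr.ne' hy]
  congr 1
  ext P
  rw [Metric.mem_sphere, dist_comm]
  rfl
end

section
/- Perpendicularity and invariance under inversion: let O, Q be points of the Euclidean plane, let R > 0 and s > 0, and assume the circle Γ with center Q and radius s is distinct from the circle Ω with center O and radius R, and that O ∉ Γ. Then the inversion with center O and radius R maps Γ onto itself (the image of Γ equals Γ) if and only if dist O Q ^ 2 = R ^ 2 + s ^ 2 (i.e., Γ and Ω intersect orthogonally). -/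
/-!
Inversion is `x ↦ lineMap O x k` with `k = (R / dist x O) ^ 2`, so Stewart's formula gives, for `x`
on `Γ` and `x'` its image, `dist Q x' ^ 2 - s ^ 2 = (1 - k) * (dist O Q ^ 2 - R ^ 2 - s ^ 2)`.
If the circles are orthogonal, `Γ` is therefore mapped into itself, hence onto itself as inversion
is an involution. Otherwise invariance forces `k = 1`, i.e. `Γ ⊆ Ω`, and a circle of positive radius
contained in another circle equals it.
-/

open EuclideanGeometry Metric Set

theorem Function.Involutive.image_eq_self_of_mapsTo {α : Type*} {f : α → α} (hf : f.Involutive)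
    {s : Set α} (h : MapsTo f s s) : f '' s = s :=
  h.image_subset.antisymm fun x hx ↦ ⟨f x, h hx, hf x⟩

section

variable {V P : Type*} [NormedAddCommGroup V] [InnerProductSpace ℝ V] [MetricSpace P]
  [NormedAddTorsor V P]

theorem dist_sq_lineMap (p a b : P) (t : ℝ) :
    dist p (AffineMap.lineMap a b t) ^ 2 =
      (1 - t) * dist p a ^ 2 + t * dist p b ^ 2 - t * (1 - t) * dist a b ^ 2 := by
  have hpb : p -ᵥ b = (p -ᵥ a) - (b -ᵥ a) := (vsub_sub_vsub_cancel_right p b a).symm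
  rw [dist_eq_norm_vsub V, AffineMap.lineMap_apply, vsub_vadd_eq_vsub_sub, dist_eq_norm_vsub V p a,
    dist_eq_norm_vsub V p b, hpb, dist_comm, dist_eq_norm_vsub V b a, norm_sub_sq_real,
    norm_sub_sq_real, norm_smul, inner_smul_right, Real.norm_eq_abs, mul_pow, sq_abs]
  ring

theorem Metric.center_eq_and_radius_eq_of_sphere_subset_sphere [Nontrivial V] {c₁ c₂ : P}
    {r₁ r₂ : ℝ} (hr₁ : 0 < r₁) (h : sphere c₁ r₁ ⊆ sphere c₂ r₂) : c₁ = c₂ ∧ r₁ = r₂ := by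
  have hmem : ∀ u : V, ‖u‖ = r₁ → u +ᵥ c₁ ∈ sphere c₁ r₁ := fun u hu ↦ by
    simpa using hu
  have hc : c₁ = c₂ := by
    by_contra hne
    have hv : c₂ -ᵥ c₁ ≠ 0 := vsub_ne_zero.2 (Ne.symm hne)
    have hu : ‖(r₁ / ‖c₂ -ᵥ c₁‖) • (c₂ -ᵥ c₁)‖ = r₁ := by simp [norm_smul, abs_of_pos hr₁, hv]
    have h₁ := hmem _ hu
    have h₂ := hmem _ ((norm_neg _).trans hu)
    -- antipodal points of the first sphere in the direction `c₂ -ᵥ c₁` are equidistant from `c₂`,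
    -- so that direction would be orthogonal to itself
    have horth :=
      inner_vsub_vsub_of_dist_eq_of_dist_eq (h₁.trans h₂.symm) ((h h₁).trans (h h₂).symm)
    rw [vadd_vsub_vadd_cancel_right, inner_sub_right, inner_neg_right, inner_smul_right,
      real_inner_self_eq_norm_sq] at horth
    field_simp at horth
    norm_num [hr₁.ne', Ne.symm hne] at horth
  subst hc
  obtain ⟨u, hu⟩ := exists_norm_eq V hr₁.le
  exact ⟨rfl, (hmem u hu).symm.trans (h (hmem u hu))⟩

namespace EuclideanGeometry

theorem dist_inversion_sq {x c : P} (hx : x ≠ c) (R : ℝ) (p : P) :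
    dist p (inversion c R x) ^ 2 =
      (R / dist x c) ^ 2 * dist p x ^ 2 + (1 - (R / dist x c) ^ 2) * (dist p c ^ 2 - R ^ 2) := by
  have hxc : dist x c ≠ 0 := dist_ne_zero.2 hx
  rw [inversion_eq_lineMap, dist_sq_lineMap, dist_comm c x]
  field_simp
  ring

theorem inversion_mem_sphere_iff {x c p : P} {R s : ℝ} (hx : x ∈ sphere p s) (hxc : x ≠ c)
    (hR : 0 ≤ R) :
    inversion c R x ∈ sphere p s ↔ dist x c = R ∨ dist c p ^ 2 = R ^ 2 + s ^ 2 := by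
  rw [Metric.mem_sphere] at hx
  have hs : 0 ≤ s := hx ▸ dist_nonneg
  have hxc' : 0 < dist x c := dist_pos.2 hxc
  have hpower : dist p (inversion c R x) ^ 2 - s ^ 2 =
      (1 - (R / dist x c) ^ 2) * (dist c p ^ 2 - R ^ 2 - s ^ 2) := by
    rw [dist_inversion_sq hxc, dist_comm p x, dist_comm p c, hx]; ring
  rw [Metric.mem_sphere, dist_comm, ← sq_eq_sq₀ dist_nonneg hs, ← sub_eq_zero, hpower, mul_eq_zero,
    sub_eq_zero, eq_comm, pow_eq_one_iff_of_nonneg (by positivity) two_ne_zero,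
    div_eq_one_iff_eq hxc'.ne', eq_comm (a := R)]
  exact or_congr_right (by constructor <;> intro h <;> linarith)

end EuclideanGeometry

end

theorem inversion_invariant_iff_orthogonal (O Q : EuclideanSpace ℝ (Fin 2)) (R s : ℝ)
    (hR : 0 < R) (hs : 0 < s)
    (hne : ({P | dist Q P = s} : Set (EuclideanSpace ℝ (Fin 2))) ≠ {P | dist O P = R})
    (hO : dist Q O ≠ s) :
    inversion O R '' {P | dist Q P = s} = {P | dist Q P = s} ↔
      dist O Q ^ 2 = R ^ 2 + s ^ 2 := by
  have hsphere (c : EuclideanSpace ℝ (Fin 2)) (r : ℝ) : {P | dist c P = r} = sphere c r := by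
    ext; exact Metric.mem_sphere'.symm
  simp only [hsphere] at hne ⊢
  have hΓ_ne_O : ∀ P ∈ sphere Q s, P ≠ O := by
    rintro P hP rfl
    exact hO (Metric.mem_sphere'.1 hP)
  constructor
  · intro himg
    by_contra horth
    have hsub : sphere Q s ⊆ sphere O R := fun P hP ↦ by
      have hP' : inversion O R P ∈ sphere Q s := himg ▸ mem_image_of_mem _ hP
      rw [Metric.mem_sphere]
      simpa [horth] using (inversion_mem_sphere_iff hP (hΓ_ne_O P hP) hR.le).1 hP'
    obtain ⟨rfl, rfl⟩ := center_eq_and_radius_eq_of_sphere_subset_sphere hs hsub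
    exact hne rfl
  · intro horth
    exact (inversion_involutive O hR.ne').image_eq_self_of_mapsTo fun P hP ↦
      (inversion_mem_sphere_iff hP (hΓ_ne_O P hP) hR.le).2 (Or.inr horth)
end
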